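/- arXiv:math/0404501 — 5 statements merged into one kernel-verified Lean document; each statement's English description precedes it below -/
import Mathlib

section
/- Let G be a 2-connected graph and u, v two vertices of G such that G − u − v is the union of two disjoint nonempty graphs G₁ and G₂. If every vertex w of G other than u and v has degree d(w) ≥ δ, then G contains a uv-path of order at least δ + 1 that has no vertices in common with G₁. -/
open SimpleGraph

/-- `G` is 2-connected: it has at least 3 vertices, is connected, and remains connected
after deleting any single vertex. -/
def TwoConnected {V : Type*} [Fintype V] (G : SimpleGraph V) : Prop :=
  3 ≤ Fintype.card V ∧ G.Connected ∧
    ∀ v : V, ((⊤ : G.Subgraph).deleteVerts {v}).coe.Connected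

/-!
Adding the edge `uv` to the graph induced on `B ∪ {u, v}` gives a 2-connected graph in which the
vertices of `B` keep all their neighbours. So it suffices to show that a 2-connected graph whose
vertices other than `u, v` have degree at least `δ` has a `uv`-path of length at least `δ`: for
`δ ≥ 2` such a path cannot use the added edge.

This is proved by induction on the number of vertices. Take an end block of `G - u`: a minimal
connected piece `K` of `G - u - v` attached to the rest of `G - u` only at one vertex `c`. Then
`K ∪ {c}` is 2-connected and its vertices in `K` lose at most the neighbour `u`, so by induction
a neighbour `z ∈ K` of `u` is joined to `c` inside `K ∪ {c}` by a path of length at least `δ - 1`.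
Prepend the edge `uz` and continue from `c` to `v` outside `K ∪ {u}`.
-/

namespace SimpleGraph

variable {V : Type*} {G H : SimpleGraph V} {S T : Set V} {a b c t u v x : V}

def ReachableIn (G : SimpleGraph V) (S : Set V) (a b : V) : Prop :=
  ∃ p : G.Walk a b, ∀ z ∈ p.support, z ∈ S

def PreconnectedOn (G : SimpleGraph V) (S : Set V) : Prop :=
  ∀ a ∈ S, ∀ b ∈ S, G.ReachableIn S a b

def TwoConnectedOn (G : SimpleGraph V) (S : Set V) : Prop :=
  ∀ x, G.PreconnectedOn (S \ {x})

namespace ReachableIn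

theorem refl (ha : a ∈ S) : G.ReachableIn S a a :=
  ⟨.nil, by simpa using ha⟩

theorem right_mem (h : G.ReachableIn S a b) : b ∈ S :=
  h.elim fun p hp => hp b p.end_mem_support

theorem symm (h : G.ReachableIn S a b) : G.ReachableIn S b a := by
  obtain ⟨p, hp⟩ := h
  exact ⟨p.reverse, by simpa using hp⟩

theorem trans (hab : G.ReachableIn S a b) (hbc : G.ReachableIn S b c) :
    G.ReachableIn S a c := by
  obtain ⟨p, hp⟩ := hab
  obtain ⟨q, hq⟩ := hbc
  refine ⟨p.append q, fun z hz => ?_⟩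
  rcases Walk.mem_support_append_iff p q |>.1 hz with hz | hz
  exacts [hp z hz, hq z hz]

theorem mono (h : G.ReachableIn S a b) (hST : S ⊆ T) : G.ReachableIn T a b :=
  h.imp fun _ hp z hz => hST (hp z hz)

theorem mono_graph (h : G.ReachableIn S a b) (hGH : G ≤ H) : H.ReachableIn S a b :=
  h.elim fun p hp => ⟨p.mapLe hGH, by simpa [Walk.support_mapLe_eq_support] using hp⟩

theorem concat (h : G.ReachableIn S a b) (hbc : G.Adj b c) (hc : c ∈ S) :
    G.ReachableIn S a c := by
  obtain ⟨p, hp⟩ := h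
  refine ⟨p.concat hbc, fun z hz => ?_⟩
  rw [Walk.support_concat, List.mem_append, List.mem_singleton] at hz
  rcases hz with hz | rfl
  exacts [hp z hz, hc]

theorem exists_isPath (h : G.ReachableIn S a b) :
    ∃ p : G.Walk a b, p.IsPath ∧ ∀ z ∈ p.support, z ∈ S := by
  classical
  obtain ⟨p, hp⟩ := h
  exact ⟨p.toPath, p.toPath.isPath, fun z hz => hp z (p.support_toPath_subset_support hz)⟩

theorem reachableIn_setOf (h : G.ReachableIn S a b) :
    G.ReachableIn {y | G.ReachableIn S a y} a b := by
  classical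
  obtain ⟨p, hp⟩ := h
  refine ⟨p, fun z hz => ⟨p.takeUntil z hz, fun y hy => hp y ?_⟩⟩
  exact p.support_takeUntil_subset_support hz hy

theorem exists_adj_exit {B F : Set V} (h : G.ReachableIn T a t) (ha : a ∈ B) (ht : t ∉ B)
    (hB : ∀ b ∈ B, ∀ y ∈ T, G.Adj b y → y ∈ B ∨ y ∈ F) :
    ∃ b, G.ReachableIn (B ∩ T) a b ∧ ∃ f ∈ F, f ∈ T ∧ G.Adj b f := by
  obtain ⟨p, hp⟩ := h
  set P := {y | G.ReachableIn (B ∩ T) a y}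
  have haP : a ∈ P := refl ⟨ha, hp a p.start_mem_support⟩
  have htP : t ∉ P := fun h => ht h.right_mem.1
  obtain ⟨d, hd, hfst, hsnd⟩ := p.exists_boundary_dart P haP htP
  have hsndT : d.snd ∈ T := hp _ (p.dart_snd_mem_support_of_mem_darts hd)
  refine ⟨d.fst, hfst, ?_⟩
  rcases hB d.fst hfst.right_mem.1 d.snd hsndT d.adj with hB' | hF
  · exact absurd (hfst.concat d.adj ⟨hB', hsndT⟩) hsnd
  · exact ⟨d.snd, hF, hsndT, d.adj⟩

end ReachableIn

theorem preconnectedOn_setOf_reachableIn :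
    G.PreconnectedOn {y | G.ReachableIn S a y} := fun _ hb _ hb' =>
  hb.reachableIn_setOf.symm.trans hb'.reachableIn_setOf

theorem PreconnectedOn.insert_of_adj (hS : G.PreconnectedOn S) (hc : ∃ k ∈ S, G.Adj c k) :
    G.PreconnectedOn (insert c S) := by
  obtain ⟨k, hk, hck⟩ := hc
  have hc : ∀ y ∈ S, G.ReachableIn (insert c S) c y := fun y hy =>
    ((hS k hk y hy).mono (Set.subset_insert c S)).symm.concat hck.symm (.inl rfl) |>.symm
  rintro a (rfl | ha) b (rfl | hb)
  · exact .refl (.inl rfl)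
  · exact hc b hb
  · exact (hc a ha).symm
  · exact (hS a ha b hb).mono (Set.subset_insert c S)

theorem Subgraph.reachableIn_verts {G' : G.Subgraph} {a b : G'.verts}
    (h : G'.coe.Reachable a b) : G.ReachableIn G'.verts a b := by
  obtain ⟨p⟩ := h
  refine ⟨p.map G'.hom, fun z (hz : z ∈ (p.map G'.hom).support) => ?_⟩
  rw [Walk.support_map, List.mem_map] at hz
  obtain ⟨y, -, rfl⟩ := hz
  exact y.2

theorem _root_.TwoConnected.twoConnectedOn_univ [Fintype V] (hG : TwoConnected G) :
    G.TwoConnectedOn Set.univ := fun x a ha b hb =>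
  Subgraph.reachableIn_verts ((hG.2.2 x).preconnected ⟨a, ha⟩ ⟨b, hb⟩)

theorem Walk.IsPath.append {p : G.Walk a b} {q : G.Walk b c} (hp : p.IsPath) (hq : q.IsPath)
    (h : ∀ y ∈ p.support, y ∈ q.support → y = b) : (p.append q).IsPath := by
  have hq' := hq.support_nodup
  rw [← q.cons_tail_support, List.nodup_cons] at hq'
  rw [Walk.isPath_def, Walk.support_append, List.nodup_append]
  refine ⟨hp.support_nodup, hq'.2, fun y hy y' hy' hyy' => hq'.1 ?_⟩
  subst hyy'
  exact h y hy (List.mem_of_mem_tail hy') ▸ hy'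

/-- For minimal `K`, `K ∪ {c}` is an end block of `S - u` with cut vertex `c`. -/
structure IsFlap (G : SimpleGraph V) (S : Set V) (u v c : V) (K : Set V) : Prop where
  center_mem : c ∈ S
  center_ne : c ≠ u
  subset : K ⊆ S \ {u, v, c}
  nonempty : K.Nonempty
  preconnectedOn : G.PreconnectedOn K
  adj_mem : ∀ k ∈ K, ∀ y ∈ S, G.Adj k y → y ∈ K ∨ y = c ∨ y = u

namespace IsFlap

variable {K : Set V} {k z : V}

theorem mem (hF : G.IsFlap S u v c K) (hk : k ∈ K) : k ∈ S := (hF.subset hk).1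

theorem ne_left (hF : G.IsFlap S u v c K) (hk : k ∈ K) : k ≠ u :=
  fun h => (hF.subset hk).2 (.inl h)

theorem ne_right (hF : G.IsFlap S u v c K) (hk : k ∈ K) : k ≠ v :=
  fun h => (hF.subset hk).2 (.inr (.inl h))

theorem ne_center (hF : G.IsFlap S u v c K) (hk : k ∈ K) : k ≠ c :=
  fun h => (hF.subset hk).2 (.inr (.inr h))

theorem left_notMem (hF : G.IsFlap S u v c K) : u ∉ K := fun h => hF.ne_left h rfl

theorem right_notMem (hF : G.IsFlap S u v c K) : v ∉ K := fun h => hF.ne_right h rfl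

theorem center_notMem (hF : G.IsFlap S u v c K) : c ∉ K := fun h => hF.ne_center h rfl

theorem insert_subset (hF : G.IsFlap S u v c K) : insert c K ⊆ S :=
  Set.insert_subset hF.center_mem fun _ => hF.mem

theorem exists_adj_left (hF : G.IsFlap S u v c K) (hS : G.TwoConnectedOn S) (hu : u ∈ S) :
    ∃ z ∈ K, G.Adj u z := by
  obtain ⟨k, hk⟩ := hF.nonempty
  have hku : G.ReachableIn (S \ {c}) k u :=
    hS c k ⟨hF.mem hk, hF.ne_center hk⟩ u ⟨hu, hF.center_ne.symm⟩
  obtain ⟨z, hz, f, rfl, -, hzf⟩ := hku.exists_adj_exit (F := {u}) hk hF.left_notMem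
    fun k hk y hy hky => (hF.adj_mem k hk y hy.1 hky).imp_right (·.resolve_left hy.2)
  exact ⟨z, hz.right_mem.1, hzf.symm⟩

theorem exists_adj_center (hF : G.IsFlap S u v c K) (hS : G.TwoConnectedOn S) (hv : v ∈ S)
    (huv : u ≠ v) : ∃ z ∈ K, G.Adj c z := by
  obtain ⟨k, hk⟩ := hF.nonempty
  have hkv : G.ReachableIn (S \ {u}) k v :=
    hS u k ⟨hF.mem hk, hF.ne_left hk⟩ v ⟨hv, huv.symm⟩
  obtain ⟨z, hz, f, rfl, -, hzf⟩ := hkv.exists_adj_exit (F := {c}) hk hF.right_notMem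
    fun k hk y hy hky => (hF.adj_mem k hk y hy.1 hky).imp_right (·.resolve_right hy.2)
  exact ⟨z, hz.right_mem.1, hzf.symm⟩

theorem reachableIn_center (hF : G.IsFlap S u v c K) (hS : G.TwoConnectedOn S) (hv : v ∈ S)
    (huv : u ≠ v) : G.ReachableIn ((S \ {u}) \ K) c v := by
  by_cases hvc : v = c
  · exact hvc ▸ .refl ⟨⟨hv, huv.symm⟩, hF.right_notMem⟩
  have hvc' : G.ReachableIn (S \ {u}) v c :=
    hS u v ⟨hv, huv.symm⟩ c ⟨hF.center_mem, hF.center_ne⟩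
  obtain ⟨b, hb, f, rfl, -, hbf⟩ := hvc'.exists_adj_exit (B := ((S \ {u}) \ K) \ {c}) (F := {c})
    ⟨⟨⟨hv, huv.symm⟩, hF.right_notMem⟩, hvc⟩ (fun h => h.2 rfl) fun b hb y hy hby => by
      by_cases hyc : y = c
      · exact .inr hyc
      by_cases hyK : y ∈ K
      · rcases hF.adj_mem y hyK b hb.1.1.1 hby.symm with h | h | h
        exacts [absurd h hb.1.2, absurd h hb.2, absurd h hb.1.1.2]
      · exact .inl ⟨⟨hy, hyK⟩, hyc⟩
  exact ((hb.mono fun y hy => hy.1.1).concat hbf ⟨⟨hF.center_mem, hF.center_ne⟩,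
    hF.center_notMem⟩).symm

theorem ncard_neighborSet_inter_le (hF : G.IsFlap S u v c K) (hfin : S.Finite) (hk : k ∈ K) :
    (G.neighborSet k ∩ S).ncard ≤ (G.neighborSet k ∩ insert c K).ncard + 1 := by
  have hsub : G.neighborSet k ∩ S ⊆ insert u (G.neighborSet k ∩ insert c K) := by
    rintro y ⟨hky, hy⟩
    rcases hF.adj_mem k hk y hy hky with h | h | h
    exacts [.inr ⟨hky, .inr h⟩, .inr ⟨hky, .inl h⟩, .inl h]
  have hfin' : (insert u (G.neighborSet k ∩ insert c K)).Finite :=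
    ((hfin.subset hF.insert_subset).inter_of_right _).insert u
  exact (Set.ncard_le_ncard hsub hfin').trans (Set.ncard_insert_le _ _)

theorem exists_ssubset_of_not_reachableIn (hF : G.IsFlap S u v c K) (hx : x ∈ K)
    (ha : a ∈ insert c K \ {x}) (hac : ¬G.ReachableIn (insert c K \ {x}) a c) :
    ∃ K' ⊂ K, G.IsFlap S u v x K' := by
  set M := {y | G.ReachableIn (insert c K \ {x}) a y}
  have hMK : M ⊆ K \ {x} := fun y hy => by
    obtain ⟨hyc | hyK, hyx⟩ := hy.right_mem
    · have hay : G.ReachableIn (insert c K \ {x}) a y := hy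
      rw [hyc] at hay
      exact absurd hay hac
    · exact ⟨hyK, hyx⟩
  refine ⟨M, (hMK.trans Set.sdiff_subset).ssubset_of_ne fun h => (hMK (h ▸ hx)).2 rfl, ?_⟩
  refine ⟨hF.mem hx, hF.ne_left hx, fun y hy => ?_, ⟨a, .refl ha⟩,
    preconnectedOn_setOf_reachableIn, fun k hk y hy hky => ?_⟩
  · obtain ⟨hyK, hyx⟩ := hMK hy
    exact ⟨hF.mem hyK, by simp [hF.ne_left hyK, hF.ne_right hyK, hyx]⟩
  · by_cases hyu : y = u
    · exact .inr (.inr hyu)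
    by_cases hyx : y = x
    · exact .inr (.inl hyx)
    have hyc : y ∈ insert c K := by
      rcases hF.adj_mem k (hMK hk).1 y hy hky with h | h | h
      exacts [.inr h, .inl h, absurd h hyu]
    exact .inl (hk.concat hky ⟨hyc, hyx⟩)

theorem twoConnectedOn_insert (hF : G.IsFlap S u v c K) (hS : G.TwoConnectedOn S) (hv : v ∈ S)
    (huv : u ≠ v) (hfin : K.Finite)
    (hmin : ∀ c' K', G.IsFlap S u v c' K' → K.ncard ≤ K'.ncard) :
    G.TwoConnectedOn (insert c K) := by
  intro x
  by_cases hxK : x ∈ K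
  · have hreach : ∀ y ∈ insert c K \ {x}, G.ReachableIn (insert c K \ {x}) y c := by
      intro y hy
      by_contra h
      obtain ⟨K', hK'K, hK'⟩ := hF.exists_ssubset_of_not_reachableIn hxK hy h
      exact (hmin x K' hK').not_gt (Set.ncard_lt_ncard hK'K hfin)
    exact fun a ha b hb => (hreach a ha).trans (hreach b hb).symm
  by_cases hxc : x = c
  · rw [hxc, Set.insert_sdiff_self_of_notMem hF.center_notMem]
    exact hF.preconnectedOn
  · rw [Set.sdiff_singleton_eq_self (by simp [hxc, hxK])]
    exact hF.preconnectedOn.insert_of_adj (hF.exists_adj_center hS hv huv)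

theorem exists_isPath_length_gt (hF : G.IsFlap S u v c K) (hS : G.TwoConnectedOn S) (hu : u ∈ S)
    (hv : v ∈ S) (huv : u ≠ v) (huz : G.Adj u z) {s : G.Walk z c} (hs : s.IsPath)
    (hsK : ∀ y ∈ s.support, y ∈ insert c K) :
    ∃ p : G.Walk u v, p.IsPath ∧ s.length < p.length ∧ ∀ y ∈ p.support, y ∈ S := by
  obtain ⟨r, hr, hrS⟩ := (hF.reachableIn_center hS hv huv).exists_isPath
  have hsr : (s.append r).IsPath := hs.append hr fun y hys hyr => by
    rcases hsK y hys with h | h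
    exacts [h, absurd h (hrS y hyr).2]
  have hu_sr : u ∉ (s.append r).support := by
    rw [Walk.mem_support_append_iff]
    rintro (h | h)
    · rcases hsK u h with h | h
      exacts [hF.center_ne h.symm, hF.left_notMem h]
    · exact (hrS u h).1.2 rfl
  refine ⟨.cons huz (s.append r), hsr.cons hu_sr, by simp, fun y hy => ?_⟩
  rw [Walk.support_cons, List.mem_cons, Walk.mem_support_append_iff] at hy
  rcases hy with rfl | hy | hy
  exacts [hu, hF.insert_subset (hsK y hy), (hrS y hy).1.1]

end IsFlap

theorem isFlap_setOf_reachableIn {w : V} (hv : v ∈ S) (huv : u ≠ v) (hw : w ∈ S)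
    (hwu : w ≠ u) (hwv : w ≠ v) : G.IsFlap S u v v {y | G.ReachableIn (S \ {u, v}) w y} where
  center_mem := hv
  center_ne := huv.symm
  subset y hy := by
    obtain ⟨hyS, hyuv⟩ := hy.right_mem
    exact ⟨hyS, by simpa using hyuv⟩
  nonempty := ⟨w, .refl ⟨hw, by simp [hwu, hwv]⟩⟩
  preconnectedOn := preconnectedOn_setOf_reachableIn
  adj_mem k hk y hy hky := by
    by_cases hyu : y = u
    · exact .inr (.inr hyu)
    by_cases hyv : y = v
    · exact .inr (.inl hyv)
    exact .inl (hk.concat hky ⟨hy, by simp [hyu, hyv]⟩)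

theorem TwoConnectedOn.exists_isFlap_twoConnectedOn_insert (hS : G.TwoConnectedOn S)
    (hfin : S.Finite) (hv : v ∈ S) (huv : u ≠ v) (hw : ∃ w ∈ S, w ≠ u ∧ w ≠ v) :
    ∃ c K, G.IsFlap S u v c K ∧ G.TwoConnectedOn (insert c K) := by
  obtain ⟨w, hw, hwu, hwv⟩ := hw
  obtain ⟨⟨c, K⟩, hF, hmin⟩ := (measure fun p : V × Set V => p.2.ncard).wf.has_min
    {p | G.IsFlap S u v p.1 p.2} ⟨(v, _), isFlap_setOf_reachableIn (G := G) hv huv hw hwu hwv⟩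
  exact ⟨c, K, hF, hF.twoConnectedOn_insert hS hv huv (hfin.subset fun _ hk => hF.mem hk)
    fun c' K' hF' => not_lt.1 (hmin (c', K') hF')⟩

theorem TwoConnectedOn.exists_isPath_le_length (hS : G.TwoConnectedOn S) (hfin : S.Finite)
    (hu : u ∈ S) (hv : v ∈ S) (huv : u ≠ v) (hw : ∃ w ∈ S, w ≠ u ∧ w ≠ v) {δ : ℕ}
    (hdeg : ∀ w ∈ S, w ≠ u → w ≠ v → δ ≤ (G.neighborSet w ∩ S).ncard) :
    ∃ p : G.Walk u v, p.IsPath ∧ δ ≤ p.length ∧ ∀ y ∈ p.support, y ∈ S := by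
  induction hn : S.ncard using Nat.strong_induction_on generalizing S u v δ with
  | _ n ih =>
  obtain ⟨c, K, hF, hK⟩ := hS.exists_isFlap_twoConnectedOn_insert hfin hv huv hw
  obtain ⟨z, hz, huz⟩ := hF.exists_adj_left hS hu
  have hdegK : ∀ k ∈ K, δ ≤ (G.neighborSet k ∩ insert c K).ncard + 1 := fun k hk =>
    (hdeg k (hF.mem hk) (hF.ne_left hk) (hF.ne_right hk)).trans
      (hF.ncard_neighborSet_inter_le hfin hk)
  suffices ∃ s : G.Walk z c, s.IsPath ∧ δ ≤ s.length + 1 ∧ ∀ y ∈ s.support, y ∈ insert c K by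
    obtain ⟨s, hs, hδs, hsK⟩ := this
    obtain ⟨p, hp, hlen, hpS⟩ := hF.exists_isPath_length_gt hS hu hv huv huz hs hsK
    exact ⟨p, hp, by omega, hpS⟩
  by_cases hK : ∃ k ∈ K, k ≠ z
  · have hlt : (insert c K).ncard < n := hn ▸ Set.ncard_lt_ncard
      ((Set.ssubset_iff_of_subset hF.insert_subset).2
        ⟨u, hu, fun h => h.elim hF.center_ne.symm hF.left_notMem⟩) hfin
    obtain ⟨k, hk, hkz⟩ := hK
    obtain ⟨s, hs, hlen, hsK⟩ := ih _ hlt hK (hfin.subset hF.insert_subset) (.inr hz) (.inl rfl)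
      (hF.ne_center hz) ⟨k, .inr hk, hkz, hF.ne_center hk⟩ (δ := δ - 1)
      (fun y hy hyz hyc => Nat.sub_le_of_le_add (hdegK y (hy.resolve_left hyc))) rfl
    exact ⟨s, hs, by omega, hsK⟩
  · -- `K = {z}`, so `z` has no neighbours in `S` besides `c` and `u`, and `δ ≤ 2`.
    push Not at hK
    obtain ⟨k, hk, hck⟩ := hF.exists_adj_center hS hv huv
    obtain rfl := hK k hk
    have hN : G.neighborSet k ∩ insert c K ⊆ {c} := by
      rintro y ⟨hky, rfl | hy⟩
      exacts [rfl, absurd (hK y hy ▸ hky) (G.loopless.irrefl k)]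
    have hδ := (hdegK k hk).trans (Nat.add_le_add_right
      ((Set.ncard_le_ncard hN).trans (Set.ncard_singleton c).le) 1)
    exact ⟨.cons hck.symm .nil, by simp [hF.ne_center hk], by simpa using hδ, by simp [hk]⟩

theorem degree_le_ncard_neighborSet_inter [Fintype V] [DecidableRel G.Adj] {w : V} (hGH : G ≤ H)
    (hw : G.neighborSet w ⊆ T) : G.degree w ≤ (H.neighborSet w ∩ T).ncard := by
  rw [← card_neighborSet_eq_degree, ← Set.toFinset_card, ← Set.ncard_eq_toFinset_card']
  exact Set.ncard_le_ncard fun y hy => ⟨hGH hy, hw hy⟩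

section Separation

variable {A B : Set V}

theorem mem_union_iff_of_cover (hcover : A ∪ B = ({u, v} : Set V)ᶜ) :
    x ∈ A ∪ B ↔ x ∉ ({u, v} : Set V) := by
  rw [hcover]
  rfl

theorem exists_reachableIn_of_separation (hG : G.TwoConnectedOn Set.univ)
    (hdisj : Disjoint A B) (hcover : A ∪ B = ({u, v} : Set V)ᶜ)
    (hnoedge : ∀ a ∈ A, ∀ b ∈ B, ¬G.Adj a b) (hb : b ∈ B) (hbx : b ≠ x) (ht : t ∉ B)
    (htx : t ≠ x) : ∃ y ∈ ({u, v} : Set V), y ≠ x ∧ G.ReachableIn (Aᶜ \ {x}) b y := by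
  have hbt : G.ReachableIn (Set.univ \ {x}) b t := hG x b ⟨trivial, hbx⟩ t ⟨trivial, htx⟩
  obtain ⟨b', hb', y, hy, ⟨-, hyx⟩, hb'y⟩ := hbt.exists_adj_exit (F := {u, v}) hb ht
    fun b' hb' y _ hb'y => by
      by_cases hyuv : y ∈ ({u, v} : Set V)
      · exact .inr hyuv
      · exact .inl (((mem_union_iff_of_cover hcover).2 hyuv).resolve_left
          fun hyA => hnoedge y hyA b' hb' hb'y.symm)
  have hyA : y ∉ A := fun hyA => (mem_union_iff_of_cover hcover).1 (.inl hyA) hy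
  refine ⟨y, hy, hyx, (hb'.mono ?_).concat hb'y ⟨hyA, hyx⟩⟩
  exact fun z hz => ⟨hdisj.notMem_of_mem_right hz.1, hz.2.2⟩

theorem ne_of_separation (hG : G.TwoConnectedOn Set.univ) (hdisj : Disjoint A B)
    (hcover : A ∪ B = ({u, v} : Set V)ᶜ) (hnoedge : ∀ a ∈ A, ∀ b ∈ B, ¬G.Adj a b)
    (hA : A.Nonempty) (hB : B.Nonempty) : u ≠ v := by
  rintro rfl
  obtain ⟨a, ha⟩ := hA
  obtain ⟨b, hb⟩ := hB
  obtain ⟨y, hy, hyu, -⟩ := exists_reachableIn_of_separation hG hdisj hcover hnoedge hb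
    (fun h => (mem_union_iff_of_cover hcover).1 (.inr hb) (.inl h))
    (hdisj.notMem_of_mem_left ha) (fun h => (mem_union_iff_of_cover hcover).1 (.inl ha) (.inl h))
  exact hyu (by simpa using hy)

theorem reachableIn_compl_of_separation (hG : G.TwoConnectedOn Set.univ)
    (hdisj : Disjoint A B) (hcover : A ∪ B = ({u, v} : Set V)ᶜ)
    (hnoedge : ∀ a ∈ A, ∀ b ∈ B, ¬G.Adj a b) (hb : b ∈ B) (huv : u ≠ v) :
    G.ReachableIn Aᶜ u v := by
  have hB : ∀ y ∈ ({u, v} : Set V), y ∉ B := fun y hy hyB =>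
    (mem_union_iff_of_cover hcover).1 (.inr hyB) hy
  obtain ⟨y, hy, hyu, hby⟩ := exists_reachableIn_of_separation hG hdisj hcover hnoedge hb
    (fun h => hB b (.inl h) hb) (hB v (.inr rfl)) huv.symm
  obtain ⟨y', hy', hy'v, hby'⟩ := exists_reachableIn_of_separation hG hdisj hcover hnoedge hb
    (fun h => hB b (.inr h) hb) (hB u (.inl rfl)) huv
  rw [show y = v by simpa [hyu] using hy] at hby
  rw [show y' = u by simpa [hy'v] using hy'] at hby'
  exact (hby'.mono Set.sdiff_subset).symm.trans (hby.mono Set.sdiff_subset)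

theorem twoConnectedOn_sup_edge_of_separation (hG : G.TwoConnectedOn Set.univ)
    (hdisj : Disjoint A B) (hcover : A ∪ B = ({u, v} : Set V)ᶜ)
    (hnoedge : ∀ a ∈ A, ∀ b ∈ B, ¬G.Adj a b) (huv : u ≠ v) :
    (G ⊔ edge u v).TwoConnectedOn Aᶜ := by
  intro x
  have hhub : ∀ a ∈ Aᶜ \ {x}, ∃ y ∈ ({u, v} : Set V), y ≠ x ∧
      (G ⊔ edge u v).ReachableIn (Aᶜ \ {x}) a y := by
    rintro a ⟨haA, hax⟩
    by_cases hauv : a ∈ ({u, v} : Set V)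
    · exact ⟨a, hauv, hax, .refl ⟨haA, hax⟩⟩
    have haB : a ∈ B := ((mem_union_iff_of_cover hcover).2 hauv).resolve_left haA
    obtain ⟨t, ht, htx⟩ : ∃ t ∈ ({u, v} : Set V), t ≠ x := by
      by_cases hux : u = x
      · exact ⟨v, .inr rfl, hux ▸ huv.symm⟩
      · exact ⟨u, .inl rfl, hux⟩
    obtain ⟨y, hy, hyx, hay⟩ := exists_reachableIn_of_separation hG hdisj hcover hnoedge haB hax
      (fun htB => (mem_union_iff_of_cover hcover).1 (.inr htB) ht) htx
    exact ⟨y, hy, hyx, hay.mono_graph le_sup_left⟩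
  intro a ha b hb
  obtain ⟨y, hy, hyx, hay⟩ := hhub a ha
  obtain ⟨y', hy', hy'x, hby'⟩ := hhub b hb
  refine hay.trans (.trans ?_ hby'.symm)
  by_cases hyy' : y = y'
  · exact hyy' ▸ .refl hay.right_mem
  · refine (ReachableIn.refl hay.right_mem).concat (.inr ((edge_adj ..).2 ⟨?_, hyy'⟩))
      hby'.right_mem
    rcases hy with rfl | rfl <;> rcases hy' with rfl | rfl <;> simp_all

theorem exists_isPath_le_length_of_separation [Fintype V] [DecidableRel G.Adj] {δ : ℕ}
    (hG : G.TwoConnectedOn Set.univ) (hdisj : Disjoint A B)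
    (hcover : A ∪ B = ({u, v} : Set V)ᶜ) (hnoedge : ∀ a ∈ A, ∀ b ∈ B, ¬G.Adj a b)
    (hb : b ∈ B) (huv : u ≠ v) (hdeg : ∀ w ∈ B, δ ≤ G.degree w) :
    ∃ p : G.Walk u v, p.IsPath ∧ δ ≤ p.length ∧ ∀ y ∈ p.support, y ∈ Aᶜ := by
  rcases le_or_gt δ 1 with hδ | hδ
  · obtain ⟨p, hp, hpA⟩ :=
      (reachableIn_compl_of_separation hG hdisj hcover hnoedge hb huv).exists_isPath
    exact ⟨p, hp, hδ.trans (Walk.not_nil_iff_lt_length.1 (Walk.not_nil_of_ne huv)), hpA⟩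
  have hB : ∀ w ∈ Aᶜ, w ≠ u → w ≠ v → w ∈ B := fun w hwA hwu hwv =>
    ((mem_union_iff_of_cover hcover).2 (by simp [hwu, hwv])).resolve_left hwA
  have hA : ∀ y ∈ ({u, v} : Set V), y ∈ Aᶜ := fun y hy hyA =>
    (mem_union_iff_of_cover hcover).1 (.inl hyA) hy
  have hbuv : b ∉ ({u, v} : Set V) := (mem_union_iff_of_cover hcover).1 (.inr hb)
  have hG' := twoConnectedOn_sup_edge_of_separation hG hdisj hcover hnoedge huv
  obtain ⟨p, hp, hlen, hpA⟩ := hG'.exists_isPath_le_length (Set.toFinite _) (hA u (.inl rfl))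
    (hA v (.inr rfl)) huv
    ⟨b, hdisj.notMem_of_mem_right hb, fun h => hbuv (.inl h), fun h => hbuv (.inr h)⟩
    fun w hwA hwu hwv => (hdeg w (hB w hwA hwu hwv)).trans
      (degree_le_ncard_neighborSet_inter le_sup_left
        fun y hy hyA => hnoedge y hyA w (hB w hwA hwu hwv) hy.symm)
  have hpG : ∀ e ∈ p.edges, e ∈ G.edgeSet := fun e he => by
    have := p.edges_subset_edgeSet he
    rw [edgeSet_sup, edgeSet_edge_of_ne huv] at this
    rcases this with h | rfl
    · exact h
    · have := hp.length_eq_one_of_mem_edges he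
      omega
  exact ⟨p.transfer G hpG, hp.transfer hpG, by rwa [Walk.length_transfer],
    by rwa [Walk.support_transfer]⟩

end Separation

end SimpleGraph

/-- Let `G` be a 2-connected graph and `u, v` two vertices such that `G − u − v` is the
union of two disjoint nonempty graphs `G₁` (on vertex set `A`) and `G₂` (on vertex set `B`),
i.e. `A` and `B` are disjoint nonempty sets covering all vertices except `u, v`, with no
edge of `G` between them. If every vertex `w ≠ u, v` has degree at least `δ`, then `G`
contains a `uv`-path of order at least `δ + 1` having no vertex in common with `G₁`. -/
theorem path_avoiding_component {V : Type*} [Fintype V] (G : SimpleGraph V)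
    [DecidableRel G.Adj] (hG : TwoConnected G) (u v : V) (δ : ℕ)
    (A B : Set V) (hA : A.Nonempty) (hB : B.Nonempty)
    (hdisj : Disjoint A B) (hcover : A ∪ B = ({u, v} : Set V)ᶜ)
    (hnoedge : ∀ a ∈ A, ∀ b ∈ B, ¬ G.Adj a b)
    (hdeg : ∀ w : V, w ≠ u → w ≠ v → δ ≤ G.degree w) :
    ∃ P : G.Walk u v, P.IsPath ∧ δ + 1 ≤ P.length + 1 ∧ ∀ a ∈ A, a ∉ P.support := by
  have hG' := hG.twoConnectedOn_univ
  have huv := ne_of_separation hG' hdisj hcover hnoedge hA hB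
  obtain ⟨b, hb⟩ := hB
  obtain ⟨P, hP, hlen, hPA⟩ := exists_isPath_le_length_of_separation hG' hdisj hcover hnoedge hb
    huv fun w hw => hdeg w (fun h => (mem_union_iff_of_cover hcover).1 (.inr hw) (.inl h))
      (fun h => (mem_union_iff_of_cover hcover).1 (.inr hw) (.inr h))
  exact ⟨P, hP, by omega, fun a ha h => hPA a h ha⟩
end

section
/- (Chopping Lemma) Let G be a graph with independence number α(G) ≤ α, let x and y be two distinct vertices of G, and let P be an xy-path in G of order l. Then for every interval I of integers with I ⊆ [1, l] and |I| = 2α, there exists q ∈ I such that P has a q-reduction. -/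
/-!
Among the reductions of `P` of order at least `min I`, take one of least order. If its order
exceeded `max I`, it would have at least `2α + 1` vertices, so among its vertices in even
positions `0, 2, …, 2α` two are adjacent. Jumping along that edge skips an even number
`2d ≤ 2α` of positions, giving a reduction whose order is smaller by `2d - 1 ∈ [1, 2α - 1]`;
it still has order at least `min I`, a contradiction.
-/

open SimpleGraph

/-- The independence number of `G` is at most `r`. -/
def indepNumLE {V : Type*} (G : SimpleGraph V) (r : ℕ) : Prop :=
  ∀ s : Finset V, (∀ x ∈ s, ∀ y ∈ s, x ≠ y → ¬ G.Adj x y) → s.card ≤ r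

section IndepNumLE

variable {V : Type*} {G : SimpleGraph V} {a : ℕ}

lemma indepNumLE.one_le (hα : indepNumLE G a) (v : V) : 1 ≤ a := by
  simpa using hα {v} (by simp)

lemma indepNumLE.exists_adj_of_injOn (hα : indepNumLE G a) {f : ℕ → V}
    (hf : Set.InjOn f (Set.Iic a)) : ∃ i j, i < j ∧ j ≤ a ∧ G.Adj (f i) (f j) := by
  classical
  have hcard : ((Finset.range (a + 1)).image f).card = a + 1 := by
    rw [Finset.card_image_of_injOn (by rwa [Finset.coe_range, Set.Iio_add_one_eq_Iic]),
      Finset.card_range]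
  have hdep : ¬ ∀ u ∈ (Finset.range (a + 1)).image f, ∀ v ∈ (Finset.range (a + 1)).image f,
      u ≠ v → ¬ G.Adj u v := fun h => by have := hα _ h; omega
  simp only [Finset.mem_image, Finset.mem_range, not_forall, not_not] at hdep
  obtain ⟨_, ⟨i, hi, rfl⟩, _, ⟨j, hj, rfl⟩, hne, hadj⟩ := hdep
  rcases lt_or_gt_of_ne (fun h : i = j => hne (h ▸ rfl)) with h | h
  · exact ⟨i, j, h, by omega, hadj⟩
  · exact ⟨j, i, h, by omega, hadj.symm⟩

end IndepNumLE

namespace SimpleGraph.Walk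

variable {V : Type*} {G : SimpleGraph V} {u v : V}

def IsReduction (Q P : G.Walk u v) : Prop :=
  Q.IsPath ∧ Q.support ⊆ P.support

lemma IsReduction.trans {Q R P : G.Walk u v} (hQR : Q.IsReduction R) (hRP : R.IsReduction P) :
    Q.IsReduction P :=
  ⟨hQR.1, List.Subset.trans hQR.2 hRP.2⟩

def shortcut (p : G.Walk u v) {s t : ℕ} (hadj : G.Adj (p.getVert s) (p.getVert t)) :
    G.Walk u v :=
  (p.take s).append (cons hadj (p.drop t))

lemma length_shortcut (p : G.Walk u v) {s t : ℕ} (hadj : G.Adj (p.getVert s) (p.getVert t))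
    (hs : s ≤ p.length) : (p.shortcut hadj).length = s + 1 + (p.length - t) := by
  simp only [shortcut, length_append, take_length, hs, inf_of_le_left, length_cons, drop_length]
  omega

lemma support_shortcut_sublist (p : G.Walk u v) {s t : ℕ}
    (hadj : G.Adj (p.getVert s) (p.getVert t)) (hst : s < t) (ht : t ≤ p.length) :
    (p.shortcut hadj).support.Sublist p.support := by
  rw [shortcut, support_append, support_cons, List.tail_cons, support_take,
    drop_support_eq_support_drop_min, min_eq_left ht]
  have := (List.take_sublist_take_left (l := p.support) hst).append
    (List.Sublist.refl (p.support.drop t))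
  rwa [List.take_append_drop] at this

lemma IsPath.isReduction_shortcut {p : G.Walk u v} (hp : p.IsPath) {s t : ℕ}
    (hadj : G.Adj (p.getVert s) (p.getVert t)) (hst : s < t) (ht : t ≤ p.length) :
    (p.shortcut hadj).IsReduction p :=
  have hsub := p.support_shortcut_sublist hadj hst ht
  ⟨.mk' (hp.support_nodup.sublist hsub), hsub.subset⟩

variable {a : ℕ}

lemma IsPath.exists_isReduction_length_lt (hα : indepNumLE G a) {p : G.Walk u v}
    (hp : p.IsPath) (hlen : 2 * a ≤ p.length) :
    ∃ q : G.Walk u v,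
      q.IsReduction p ∧ q.length < p.length ∧ p.length < q.length + 2 * a := by
  obtain ⟨i, j, hij, hja, hadj⟩ := hα.exists_adj_of_injOn (f := fun i => p.getVert (2 * i))
    fun i hi j hj h => by
      have := hp.getVert_injOn (by simp at hi ⊢; omega) (by simp at hj ⊢; omega) h
      omega
  have hlen' := p.length_shortcut hadj (by omega)
  exact ⟨_, hp.isReduction_shortcut hadj (by omega) (by omega), by omega, by omega⟩

lemma IsPath.exists_isReduction_length_mem_Ico (hα : indepNumLE G a) {p : G.Walk u v}
    (hp : p.IsPath) {k : ℕ} (hk : k ≤ p.length) :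
    ∃ q : G.Walk u v, q.IsReduction p ∧ k ≤ q.length ∧ q.length < k + 2 * a := by
  induction hn : p.length using Nat.strong_induction_on generalizing p with
  | _ n ih =>
    by_cases hshort : p.length < k + 2 * a
    · exact ⟨p, ⟨hp, List.Subset.refl _⟩, hk, hshort⟩
    obtain ⟨r, hrp, hlt, hgt⟩ := hp.exists_isReduction_length_lt hα (by omega)
    obtain ⟨q, hqr, hq⟩ := ih r.length (hn ▸ hlt) hrp.1 (by omega) rfl
    exact ⟨q, hqr.trans hrp, hq⟩

end SimpleGraph.Walk

theorem chopping_lemma_general {V : Type*} (G : SimpleGraph V) (a : ℕ) (hα : indepNumLE G a)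
    (x y : V) (P : G.Walk x y) (hP : P.IsPath)
    (I : Finset ℕ) (hIint : ∃ m n : ℕ, I = Finset.Icc m n)
    (hIsub : I ⊆ Finset.Icc 1 (P.length + 1)) (hIcard : I.card = 2 * a) :
    ∃ q ∈ I, ∃ Q : G.Walk x y, Q.IsPath ∧ (∀ z ∈ Q.support, z ∈ P.support) ∧
      Q.length + 1 = q := by
  obtain ⟨m, n, rfl⟩ := hIint
  have ha := hα.one_le x
  rw [Nat.card_Icc] at hIcard
  have hm := Finset.mem_Icc.mp (hIsub (Finset.mem_Icc.mpr ⟨le_refl m, by omega⟩))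
  have hn := Finset.mem_Icc.mp (hIsub (Finset.mem_Icc.mpr ⟨by omega, le_refl n⟩))
  obtain ⟨Q, ⟨hQ, hQP⟩, hQlen⟩ :=
    hP.exists_isReduction_length_mem_Ico hα (k := m - 1) (by omega)
  exact ⟨Q.length + 1, Finset.mem_Icc.mpr (by omega), Q, hQ, fun z hz => hQP hz, rfl⟩

/-- (Chopping Lemma) Let `G` be a graph with independence number at most `a`, let `x` and
`y` be two distinct vertices of `G`, and let `P` be an `xy`-path of order `l = P.length + 1`.
Then for every interval `I ⊆ [1, l]` of integers with `|I| = 2a`, there exists `q ∈ I` such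
that `P` has a `q`-reduction, i.e. an `xy`-path of order `q` all of whose vertices belong
to `P`. -/
theorem chopping_lemma {V : Type*} (G : SimpleGraph V) (a : ℕ) (hα : indepNumLE G a)
    (x y : V) (hxy : x ≠ y) (P : G.Walk x y) (hP : P.IsPath)
    (I : Finset ℕ) (hIint : ∃ m n : ℕ, I = Finset.Icc m n)
    (hIsub : I ⊆ Finset.Icc 1 (P.length + 1)) (hIcard : I.card = 2 * a) :
    ∃ q ∈ I, ∃ Q : G.Walk x y, Q.IsPath ∧ (∀ z ∈ Q.support, z ∈ P.support) ∧
      Q.length + 1 = q :=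
  chopping_lemma_general G a hα x y P hP I hIint hIsub hIcard
end

section
/- If G is a graph with minimum degree δ(G) ≥ p and independence number α(G) ≤ r, where p > r, then G contains a saw of degree at least p − r. -/
open SimpleGraph Fin.NatCast

/-- `v : Fin (2k+1) → V` is (an embedding of) a saw in `G`: the vertices `v 0, ..., v 2k`
are distinct, `G` contains the Hamiltonian cycle `(v 0, v 1, ..., v 2k, v 0)` of these
vertices (the backbone) together with the chords `(v (2t), v (2t+2))` for `0 ≤ t < k`
(in 1-based notation, the chords `(v_{2s−1}, v_{2s+1})` for `s ∈ [1, k]`). -/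
def IsSawIn {V : Type*} (G : SimpleGraph V) (k : ℕ) (v : Fin (2 * k + 1) → V) : Prop :=
  Function.Injective v ∧
  (∀ i : Fin (2 * k + 1), G.Adj (v i) (v (i + 1))) ∧
  (∀ t : ℕ, t < k →
    G.Adj (v ((2 * t : ℕ) : Fin (2 * k + 1))) (v ((2 * t + 2 : ℕ) : Fin (2 * k + 1))))

/-- The degree of the vertex `v i` of a saw, taken in the subgraph of `G` spanned by the
vertices of the saw (with all edges of `G` among them). -/
noncomputable def sawVertexDeg {V : Type*} (G : SimpleGraph V) {k : ℕ}
    (v : Fin (2 * k + 1) → V) (i : Fin (2 * k + 1)) : ℕ :=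
  Nat.card {j : Fin (2 * k + 1) // G.Adj (v i) (v j)}

namespace SawAux

open Finset

variable {V : Type*} [Fintype V] [DecidableEq V] (G : SimpleGraph V) [DecidableRel G.Adj]

/-- A triangle path with `m` triangles: spine `f 0, f 2, ..., f (2m)` with apex `f (2t+1)`
on the spine edge `(f (2t), f (2t+2))`. -/
def TriPath (f : ℕ → V) (m : ℕ) : Prop :=
  (∀ i, i ≤ 2*m → ∀ j, j ≤ 2*m → f i = f j → i = j) ∧
  (∀ i, i < 2*m → G.Adj (f i) (f (i+1))) ∧
  (∀ t, t < m → G.Adj (f (2*t)) (f (2*t+2)))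

def pathSet (f : ℕ → V) (m : ℕ) : Finset V := (Finset.range (2*m+1)).image f

def Rich (p r : ℕ) (f : ℕ → V) (m : ℕ) (x : V) : Prop :=
  p - r ≤ (pathSet f m ∩ G.neighborFinset x).card

lemma mem_pathSet_of_le {f : ℕ → V} {m i : ℕ} (hi : i ≤ 2*m) : f i ∈ pathSet f m :=
  mem_image_of_mem f (mem_range.mpr (by omega))

lemma edge_of_big (hα : indepNumLE G r) (s : Finset V) (hs : r < s.card) :
    ∃ x ∈ s, ∃ y ∈ s, G.Adj x y := by
  by_contra h
  push_neg at h
  have := hα s (fun x hx y hy _ => h x hx y hy)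
  omega

lemma rich_transfer {p r : ℕ} {f : ℕ → V} {m : ℕ} {x : V} (h : Rich G p r f m x)
    {g : ℕ → V} {k : ℕ} (hsub : ∀ u ∈ pathSet f m, G.Adj x u → u ∈ pathSet g k) :
    Rich G p r g k x := by
  refine le_trans h (card_le_card ?_)
  intro u hu
  rcases mem_inter.mp hu with ⟨h1, h2⟩
  exact mem_inter.mpr ⟨hsub u h1 ((mem_neighborFinset G x u).mp h2), h2⟩

lemma card_V_bound {f : ℕ → V} {m : ℕ} (hf : TriPath G f m) : 2*m+1 ≤ Fintype.card V := by
  have hinj : Set.InjOn f ↑(range (2*m+1)) := by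
    intro i hi j hj hij
    simp only [coe_range, Set.mem_Iio] at hi hj
    exact hf.1 i (by omega) j (by omega) hij
  have := Finset.card_image_of_injOn hinj
  have h2 := Finset.card_le_univ ((range (2*m+1)).image f)
  simp only [card_range] at this
  omega

lemma tri_exists (p r : ℕ) (hrp : r < p) [Nonempty V]
    (hδ : ∀ w : V, p ≤ G.degree w) (hα : indepNumLE G r) :
    ∃ f : ℕ → V, TriPath G f 1 := by
  obtain ⟨v₀⟩ := ‹Nonempty V›
  have hcard : r < (G.neighborFinset v₀).card := by
    rw [card_neighborFinset_eq_degree]; exact lt_of_lt_of_le hrp (hδ v₀)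
  obtain ⟨x, hx, y, hy, hxy⟩ := edge_of_big G hα _ hcard
  rw [mem_neighborFinset] at hx hy
  refine ⟨fun i => match i with | 0 => x | 1 => v₀ | _ => y, ?_, ?_, ?_⟩
  · intro i hi j hj h
    have hxv : x ≠ v₀ := fun h' => (G.ne_of_adj hx) h'.symm
    have hyv : y ≠ v₀ := fun h' => (G.ne_of_adj hy) h'.symm
    have hxy' : x ≠ y := G.ne_of_adj hxy
    interval_cases i <;> interval_cases j <;> simp_all
  · intro i hi
    interval_cases i
    · exact hx.symm
    · exact hy
  · intro t ht
    interval_cases t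
    exact hxy

lemma extend (p r : ℕ) (hrp : r < p)
    (hδ : ∀ w : V, p ≤ G.degree w) (hα : indepNumLE G r)
    {f : ℕ → V} {m : ℕ} (hf : TriPath G f m)
    (hnr : ¬ Rich G p r f m (f (2*m))) :
    ∃ f', TriPath G f' (m+1) := by
  set b := f (2*m) with hb
  have h1 : (G.neighborFinset b \ pathSet f m).card + (G.neighborFinset b ∩ pathSet f m).card
      = (G.neighborFinset b).card := Finset.card_sdiff_add_card_inter _ _
  have hdeg : p ≤ (G.neighborFinset b).card := by
    rw [card_neighborFinset_eq_degree]; exact hδ b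
  have h2 : (pathSet f m ∩ G.neighborFinset b).card < p - r := by
    simp only [Rich, not_le] at hnr; exact hnr
  rw [Finset.inter_comm] at h2
  have h3 : r < (G.neighborFinset b \ pathSet f m).card := by omega
  obtain ⟨x, hx, y, hy, hxy⟩ := edge_of_big G hα _ h3
  rw [mem_sdiff, mem_neighborFinset] at hx hy
  obtain ⟨hxb, hxP⟩ := hx
  obtain ⟨hyb, hyP⟩ := hy
  refine ⟨fun i => if i = 2*m+1 then x else if i = 2*m+2 then y else f i, ?_, ?_, ?_⟩
  · intro i hi j hj h
    simp only at h
    have hi3 : i ≤ 2*m ∨ i = 2*m+1 ∨ i = 2*m+2 := by omega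
    have hj3 : j ≤ 2*m ∨ j = 2*m+1 ∨ j = 2*m+2 := by omega
    rcases hi3 with hi' | hi' | hi' <;> rcases hj3 with hj' | hj' | hj'
    · rw [if_neg (by omega), if_neg (by omega), if_neg (by omega), if_neg (by omega)] at h
      exact hf.1 i hi' j hj' h
    · rw [if_neg (by omega), if_neg (by omega), hj', if_pos rfl] at h
      exact absurd (h ▸ mem_pathSet_of_le hi') hxP
    · rw [if_neg (by omega), if_neg (by omega), hj', if_neg (by omega), if_pos rfl] at h
      exact absurd (h ▸ mem_pathSet_of_le hi') hyP
    · rw [hi', if_pos rfl, if_neg (by omega), if_neg (by omega)] at h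
      have hxmem : x ∈ pathSet f m := by rw [h]; exact mem_pathSet_of_le hj'
      exact (hxP hxmem).elim
    · omega
    · rw [hi', if_pos rfl, hj', if_neg (by omega), if_pos rfl] at h
      exact absurd h (G.ne_of_adj hxy)
    · rw [hi', if_neg (by omega), if_pos rfl, if_neg (by omega), if_neg (by omega)] at h
      have hymem : y ∈ pathSet f m := by rw [h]; exact mem_pathSet_of_le hj'
      exact (hyP hymem).elim
    · rw [hi', if_neg (by omega), if_pos rfl, hj', if_pos rfl] at h
      exact absurd h.symm (G.ne_of_adj hxy)
    · omega
  · intro i hi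
    simp only
    have hi3 : i < 2*m ∨ i = 2*m ∨ i = 2*m+1 := by omega
    rcases hi3 with hi' | hi' | hi'
    · rw [if_neg (by omega), if_neg (by omega), if_neg (by omega), if_neg (by omega)]
      exact hf.2.1 i hi'
    · rw [hi', if_neg (by omega), if_neg (by omega), if_pos rfl]
      exact hxb
    · rw [hi', if_pos rfl, if_neg (by omega), if_pos rfl]
      exact hxy
  · intro t ht
    simp only
    have ht2 : t < m ∨ t = m := by omega
    rcases ht2 with ht' | ht'
    · rw [if_neg (by omega), if_neg (by omega), if_neg (by omega), if_neg (by omega)]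
      exact hf.2.2 t ht'
    · rw [ht', if_neg (by omega), if_neg (by omega), if_neg (by omega),
        if_pos (by ring)]
      exact hyb


/-- Swapping the last two vertices of a triangle path gives a triangle path. -/
lemma swap_lemma {f : ℕ → V} {m' : ℕ} (hf : TriPath G f (m'+1)) :
    ∃ f', TriPath G f' (m'+1) ∧ f' (2*m'+1) = f (2*m'+2) ∧ f' (2*m'+2) = f (2*m'+1) ∧
      (∀ i, i ≤ 2*m' → f' i = f i) ∧ pathSet f' (m'+1) = pathSet f (m'+1) := by
  set f' : ℕ → V := fun i => if i = 2*m'+1 then f (2*m'+2)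
    else if i = 2*m'+2 then f (2*m'+1) else f i with hf'
  have e1 : f' (2*m'+1) = f (2*m'+2) := by simp [hf']
  have e2 : f' (2*m'+2) = f (2*m'+1) := by rw [hf']; simp
  have e3 : ∀ i, i ≤ 2*m' → f' i = f i := by
    intro i hi; rw [hf']; simp only; rw [if_neg (by omega), if_neg (by omega)]
  refine ⟨f', ⟨?_, ?_, ?_⟩, e1, e2, e3, ?_⟩
  · intro i hi j hj h
    have hi3 : i ≤ 2*m' ∨ i = 2*m'+1 ∨ i = 2*m'+2 := by omega
    have hj3 : j ≤ 2*m' ∨ j = 2*m'+1 ∨ j = 2*m'+2 := by omega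
    rcases hi3 with hi' | hi' | hi' <;> rcases hj3 with hj' | hj' | hj'
    · rw [e3 i hi', e3 j hj'] at h
      exact hf.1 i (by omega) j (by omega) h
    · rw [e3 i hi', hj', e1] at h
      have := hf.1 i (by omega) (2*m'+2) (by omega) h; omega
    · rw [e3 i hi', hj', e2] at h
      have := hf.1 i (by omega) (2*m'+1) (by omega) h; omega
    · rw [hi', e1, e3 j hj'] at h
      have := hf.1 (2*m'+2) (by omega) j (by omega) h; omega
    · omega
    · rw [hi', e1, hj', e2] at h
      have := hf.1 (2*m'+2) (by omega) (2*m'+1) (by omega) h; omega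
    · rw [hi', e2, e3 j hj'] at h
      have := hf.1 (2*m'+1) (by omega) j (by omega) h; omega
    · rw [hi', e2, hj', e1] at h
      have := hf.1 (2*m'+1) (by omega) (2*m'+2) (by omega) h; omega
    · omega
  · intro i hi
    have hi3 : i < 2*m' ∨ i = 2*m' ∨ i = 2*m'+1 := by omega
    rcases hi3 with hi' | hi' | hi'
    · rw [e3 i (by omega), e3 (i+1) (by omega)]
      exact hf.2.1 i (by omega)
    · subst hi'
      rw [e3 (2*m') (by omega), show 2*m'+1 = 2*m'+1 from rfl, e1]
      have h := hf.2.2 m' (by omega)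
      exact h
    · subst hi'
      rw [show 2*m'+1+1 = 2*m'+2 by omega, e1, e2]
      exact (hf.2.1 (2*m'+1) (by omega)).symm
  · intro t ht
    have ht2 : t < m' ∨ t = m' := by omega
    rcases ht2 with ht' | ht'
    · rw [e3 (2*t) (by omega), e3 (2*t+2) (by omega)]
      exact hf.2.2 t (by omega)
    · rw [ht']
      rw [e3 (2*m') (by omega), e2]
      exact hf.2.1 (2*m') (by omega)
  · apply Finset.Subset.antisymm
    · intro u hu
      rcases mem_image.mp hu with ⟨i, hi, rfl⟩
      rw [mem_range] at hi
      have hi3 : i ≤ 2*m' ∨ i = 2*m'+1 ∨ i = 2*m'+2 := by omega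
      rcases hi3 with hi' | hi' | hi'
      · rw [e3 i hi']; exact mem_pathSet_of_le (by omega)
      · rw [hi', e1]; exact mem_pathSet_of_le (by omega)
      · rw [hi', e2]; exact mem_pathSet_of_le (by omega)
    · intro u hu
      rcases mem_image.mp hu with ⟨i, hi, rfl⟩
      rw [mem_range] at hi
      have hi3 : i ≤ 2*m' ∨ i = 2*m'+1 ∨ i = 2*m'+2 := by omega
      rcases hi3 with hi' | hi' | hi'
      · rw [← e3 i hi']; exact mem_pathSet_of_le (by omega)
      · rw [hi', ← e2]; exact mem_pathSet_of_le (by omega)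
      · rw [hi', ← e1]; exact mem_pathSet_of_le (by omega)


lemma phase1 (p r : ℕ) (hrp : r < p) [Nonempty V]
    (hδ : ∀ w : V, p ≤ G.degree w) (hα : indepNumLE G r) :
    ∃ m f, 1 ≤ m ∧ TriPath G f m ∧
      Rich G p r f m (f (2*m-1)) ∧ Rich G p r f m (f (2*m)) := by
  classical
  set N := Fintype.card V with hN
  set P : ℕ → Prop := fun m => 1 ≤ m ∧ ∃ f, TriPath G f m with hP
  have hPintro : ∀ m (f0 : ℕ → V), 1 ≤ m → TriPath G f0 m → P m := by
    intro m f0 h1 h2; simp only [hP]; exact ⟨h1, f0, h2⟩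
  have hPelim : ∀ m, P m → 1 ≤ m ∧ ∃ f0, TriPath G f0 m := by
    intro m hm; simpa only [hP] using hm
  obtain ⟨f₀, hf₀⟩ := tri_exists G p r hrp hδ hα
  have hP1 : P 1 := hPintro 1 f₀ le_rfl hf₀
  have hbound : ∀ m, P m → m ≤ N := by
    intro m hm
    obtain ⟨_, f, hf⟩ := hPelim m hm
    have := card_V_bound G hf
    omega
  have hN1 : 1 ≤ N := Fintype.card_pos
  obtain ⟨M, hPM, hnoext⟩ : ∃ M, P M ∧ ¬ P (M+1) := by
    refine ⟨Nat.findGreatest P N, Nat.findGreatest_spec hN1 hP1, fun hP' => ?_⟩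
    exact Nat.findGreatest_is_greatest (Nat.lt_succ_self _) (hbound _ hP') hP'
  obtain ⟨hM1, f, hf⟩ := hPelim M hPM
  obtain ⟨m', rfl⟩ : ∃ m', M = m'+1 := ⟨M-1, by omega⟩
  by_cases hb : Rich G p r f (m'+1) (f (2*(m'+1)))
  · by_cases ha : Rich G p r f (m'+1) (f (2*(m'+1)-1))
    · exact ⟨m'+1, f, by omega, hf, ha, hb⟩
    · obtain ⟨f', hf', e1, e2, e3, eps⟩ := swap_lemma G hf
      have hnr : ¬ Rich G p r f' (m'+1) (f' (2*(m'+1))) := by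
        rw [show 2*(m'+1) = 2*m'+2 by omega, e2]
        intro hR
        apply ha
        rw [show 2*(m'+1)-1 = 2*m'+1 by omega]
        unfold Rich at hR ⊢
        rwa [eps] at hR
      obtain ⟨f'', hf''⟩ := extend G p r hrp hδ hα hf' hnr
      exact absurd (hPintro (m'+1+1) f'' (by omega) hf'') hnoext
  · obtain ⟨f'', hf''⟩ := extend G p r hrp hδ hα hf hb
    exact absurd (hPintro (m'+1+1) f'' (by omega) hf'') hnoext


lemma phase2core (p r : ℕ) {f : ℕ → V} {m' : ℕ} (hf : TriPath G f (m'+1))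
    (ha : Rich G p r f (m'+1) (f (2*m'+1))) (hb : Rich G p r f (m'+1) (f (2*m'+2)))
    {j : ℕ} (hj : j ≤ 2*m')
    (hadj : G.Adj (f (2*m'+2)) (f j))
    (hmin : ∀ i, i ≤ 2*m'+2 →
      (G.Adj (f (2*m'+1)) (f i) ∨ G.Adj (f (2*m'+2)) (f i)) → j ≤ i) :
    ∃ k g, 1 ≤ k ∧ TriPath G g k ∧ G.Adj (g (2*k)) (g 0) ∧
      g (2*k-1) = f (2*m'+1) ∧ g (2*k) = f (2*m'+2) ∧
      Rich G p r g k (f (2*m'+1)) ∧ Rich G p r g k (f (2*m'+2)) := by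
  rcases Nat.even_or_odd j with he | ho
  · -- even case : truncate at the spine vertex f j
    obtain ⟨s, hs⟩ := he
    have hs' : j = 2*s := by omega
    have hsm : s ≤ m' := by omega
    set k := m'+1-s with hk
    have hk1 : 1 ≤ k := by omega
    have h2k : 2*k + 2*s = 2*m'+2 := by omega
    set g : ℕ → V := fun i => f (i + 2*s) with hg
    have gi : ∀ i, g i = f (i + 2*s) := fun i => by rw [hg]
    have sub : ∀ (x : V), (∀ u ∈ pathSet f (m'+1), G.Adj x u → u ∈ pathSet g k) →
        Rich G p r f (m'+1) x → Rich G p r g k x := fun x hs hx => rich_transfer G hx hs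
    refine ⟨k, g, hk1, ⟨?_, ?_, ?_⟩, ?_, ?_, ?_, ?_, ?_⟩
    · intro i hi j2 hj2 h
      rw [gi, gi] at h
      have := hf.1 (i+2*s) (by omega) (j2+2*s) (by omega) h
      omega
    · intro i hi
      rw [gi, gi, show i+1+2*s = (i+2*s)+1 by omega]
      exact hf.2.1 (i+2*s) (by omega)
    · intro t ht
      rw [gi, gi, show 2*t+2*s = 2*(t+s) by ring, show 2*t+2+2*s = 2*(t+s)+2 by ring]
      exact hf.2.2 (t+s) (by omega)
    · rw [gi, gi, show 2*k+2*s = 2*m'+2 by omega, show 0+2*s = 2*s by omega, ← hs']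
      exact hadj
    · rw [gi, show 2*k-1+2*s = 2*m'+1 by omega]
    · rw [gi, show 2*k+2*s = 2*m'+2 by omega]
    · refine sub _ ?_ ha
      intro u hu hadjx
      rcases mem_image.mp hu with ⟨i, hi, rfl⟩
      rw [mem_range] at hi
      have hji : j ≤ i := hmin i (by omega) (Or.inl hadjx)
      have hgi : g (i - 2*s) = f i := by rw [gi]; congr 1; omega
      rw [← hgi]
      exact mem_pathSet_of_le (by omega)
    · refine sub _ ?_ hb
      intro u hu hadjx
      rcases mem_image.mp hu with ⟨i, hi, rfl⟩
      rw [mem_range] at hi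
      have hji : j ≤ i := hmin i (by omega) (Or.inr hadjx)
      have hgi : g (i - 2*s) = f i := by rw [gi]; congr 1; omega
      rw [← hgi]
      exact mem_pathSet_of_le (by omega)
  · -- odd case : f j is an apex; reroute through it
    obtain ⟨s, hs⟩ := ho
    have hsm : s + 1 ≤ m' := by omega
    set k := m'+1-s with hk
    have hk2 : 2 ≤ k := by omega
    set g : ℕ → V := fun i => if i = 0 then f (2*s+1) else if i = 1 then f (2*s)
      else f (i + 2*s) with hg
    have g0 : g 0 = f (2*s+1) := by simp [hg]
    have g1 : g 1 = f (2*s) := by simp [hg]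
    have gi : ∀ i, 2 ≤ i → g i = f (i + 2*s) := by
      intro i h2; rw [hg]; simp only; rw [if_neg (by omega), if_neg (by omega)]
    have sub : ∀ (x : V), (∀ u ∈ pathSet f (m'+1), G.Adj x u → u ∈ pathSet g k) →
        Rich G p r f (m'+1) x → Rich G p r g k x := fun x hs hx => rich_transfer G hx hs
    have subproof : ∀ u ∈ pathSet f (m'+1), j ≤ (fun _ => 0) u → True := fun _ _ _ => trivial
    refine ⟨k, g, by omega, ⟨?_, ?_, ?_⟩, ?_, ?_, ?_, ?_, ?_⟩
    · intro i hi j2 hj2 h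
      have hi3 : i = 0 ∨ i = 1 ∨ 2 ≤ i := by omega
      have hj3 : j2 = 0 ∨ j2 = 1 ∨ 2 ≤ j2 := by omega
      rcases hi3 with hi' | hi' | hi' <;> rcases hj3 with hj' | hj' | hj' <;>
        subst_vars <;>
        first
        | rfl
        | (rw [g0, g1] at h; have := hf.1 (2*s+1) (by omega) (2*s) (by omega) h; omega)
        | (rw [g1, g0] at h; have := hf.1 (2*s) (by omega) (2*s+1) (by omega) h; omega)
        | (rw [g0, gi j2 (by omega)] at h
           have := hf.1 (2*s+1) (by omega) (j2+2*s) (by omega) h; omega)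
        | (rw [gi i (by omega), g0] at h
           have := hf.1 (i+2*s) (by omega) (2*s+1) (by omega) h; omega)
        | (rw [g1, gi j2 (by omega)] at h
           have := hf.1 (2*s) (by omega) (j2+2*s) (by omega) h; omega)
        | (rw [gi i (by omega), g1] at h
           have := hf.1 (i+2*s) (by omega) (2*s) (by omega) h; omega)
        | (rw [gi i (by omega), gi j2 (by omega)] at h
           have := hf.1 (i+2*s) (by omega) (j2+2*s) (by omega) h; omega)
    · intro i hi
      have hi3 : i = 0 ∨ i = 1 ∨ 2 ≤ i := by omega
      rcases hi3 with hi' | hi' | hi'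
      · subst hi'
        rw [g0, show (0:ℕ)+1 = 1 from rfl, g1]
        exact (hf.2.1 (2*s) (by omega)).symm
      · subst hi'
        rw [g1, gi 2 (by omega), show 2+2*s = 2*s+2 by omega]
        exact hf.2.2 s (by omega)
      · rw [gi i (by omega), gi (i+1) (by omega), show i+1+2*s = (i+2*s)+1 by omega]
        exact hf.2.1 (i+2*s) (by omega)
    · intro t ht
      have ht2 : t = 0 ∨ 1 ≤ t := by omega
      rcases ht2 with ht' | ht'
      · subst ht'
        rw [show 2*0 = 0 by omega, show 2*0+2 = 2 by omega, g0, gi 2 (by omega),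
          show 2+2*s = (2*s+1)+1 by omega]
        exact hf.2.1 (2*s+1) (by omega)
      · rw [gi (2*t) (by omega), gi (2*t+2) (by omega),
          show 2*t+2*s = 2*(t+s) by ring, show 2*t+2+2*s = 2*(t+s)+2 by ring]
        exact hf.2.2 (t+s) (by omega)
    · rw [gi (2*k) (by omega), show 2*k+2*s = 2*m'+2 by omega, g0, ← hs]
      exact hadj
    · rw [gi (2*k-1) (by omega), show 2*k-1+2*s = 2*m'+1 by omega]
    · rw [gi (2*k) (by omega), show 2*k+2*s = 2*m'+2 by omega]
    · refine sub _ ?_ ha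
      intro u hu hadjx
      rcases mem_image.mp hu with ⟨i, hi, rfl⟩
      rw [mem_range] at hi
      have hji : j ≤ i := hmin i (by omega) (Or.inl hadjx)
      by_cases hcase : i = 2*s+1
      · rw [hcase, ← g0]
        exact mem_pathSet_of_le (by omega)
      · have hgi : g (i - 2*s) = f i := by rw [gi _ (by omega)]; congr 1; omega
        rw [← hgi]
        exact mem_pathSet_of_le (by omega)
    · refine sub _ ?_ hb
      intro u hu hadjx
      rcases mem_image.mp hu with ⟨i, hi, rfl⟩
      rw [mem_range] at hi
      have hji : j ≤ i := hmin i (by omega) (Or.inr hadjx)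
      by_cases hcase : i = 2*s+1
      · rw [hcase, ← g0]
        exact mem_pathSet_of_le (by omega)
      · have hgi : g (i - 2*s) = f i := by rw [gi _ (by omega)]; congr 1; omega
        rw [← hgi]
        exact mem_pathSet_of_le (by omega)


lemma final (p r : ℕ) (hrp : r < p) [Nonempty V]
    (hδ : ∀ w : V, p ≤ G.degree w) (hα : indepNumLE G r) :
    ∃ k g, 1 ≤ k ∧ TriPath G g k ∧ G.Adj (g (2*k)) (g 0) ∧
      Rich G p r g k (g (2*k-1)) ∧ Rich G p r g k (g (2*k)) := by
  classical
  obtain ⟨m, f, hm1, hf, ha, hb⟩ := phase1 G p r hrp hδ hα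
  obtain ⟨m', rfl⟩ : ∃ m', m = m'+1 := ⟨m-1, by omega⟩
  rw [show 2*(m'+1)-1 = 2*m'+1 by omega] at ha
  rw [show 2*(m'+1) = 2*m'+2 by omega] at hb
  set D := (range (2*m'+1)).filter
    (fun i => G.Adj (f (2*m'+1)) (f i) ∨ G.Adj (f (2*m'+2)) (f i)) with hD
  have hDne : D.Nonempty := by
    refine ⟨2*m', ?_⟩
    rw [hD, mem_filter, mem_range]
    exact ⟨by omega, Or.inl (hf.2.1 (2*m') (by omega)).symm⟩
  set j := D.min' hDne with hjdef
  have hjmem : j ∈ (range (2*m'+1)).filter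
      (fun i => G.Adj (f (2*m'+1)) (f i) ∨ G.Adj (f (2*m'+2)) (f i)) := D.min'_mem hDne
  obtain ⟨hjlt, hjor⟩ := mem_filter.mp hjmem
  rw [mem_range] at hjlt
  have hmin : ∀ i, i ≤ 2*m'+2 →
      (G.Adj (f (2*m'+1)) (f i) ∨ G.Adj (f (2*m'+2)) (f i)) → j ≤ i := by
    intro i hi hor
    by_cases hi' : i ≤ 2*m'
    · refine D.min'_le i ?_
      rw [hD, mem_filter, mem_range]
      exact ⟨by omega, hor⟩
    · omega
  rcases hjor with hja | hjb
  · -- f j adjacent to the apex side : swap the last two vertices first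
    obtain ⟨f', hf', e1, e2, e3, eps⟩ := swap_lemma G hf
    have ha' : Rich G p r f' (m'+1) (f' (2*m'+1)) := by
      rw [e1]; unfold Rich; rw [eps]; exact hb
    have hb' : Rich G p r f' (m'+1) (f' (2*m'+2)) := by
      rw [e2]; unfold Rich; rw [eps]; exact ha
    have hadj' : G.Adj (f' (2*m'+2)) (f' j) := by
      rw [e2, e3 j (by omega)]; exact hja
    have hmin' : ∀ i, i ≤ 2*m'+2 →
        (G.Adj (f' (2*m'+1)) (f' i) ∨ G.Adj (f' (2*m'+2)) (f' i)) → j ≤ i := by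
      intro i hi hor
      by_cases hi2 : i ≤ 2*m'
      · rw [e3 i hi2, e1, e2] at hor
        exact hmin i (by omega) hor.symm
      · omega
    obtain ⟨k, g, hk, hg, hcl, hg1, hg2, hra, hrb⟩ :=
      phase2core G p r hf' ha' hb' (by omega : j ≤ 2*m') hadj' hmin'
    exact ⟨k, g, hk, hg, hcl, by rw [hg1]; exact hra, by rw [hg2]; exact hrb⟩
  · obtain ⟨k, g, hk, hg, hcl, hg1, hg2, hra, hrb⟩ :=
      phase2core G p r hf ha hb (by omega : j ≤ 2*m') hjb hmin
    exact ⟨k, g, hk, hg, hcl, by rw [hg1]; exact hra, by rw [hg2]; exact hrb⟩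

end SawAux


/-- If `G` is a (nonempty) graph with minimum degree `δ(G) ≥ p` and independence number
`α(G) ≤ r`, where `p > r`, then `G` contains a saw of degree at least `p − r`, the degree
of a saw being the minimum of the degrees of its last two vertices `v_{2k}` and `v_{2k+1}`
in the subgraph of `G` spanned by the saw's vertices. -/
theorem exists_saw {V : Type*} [Fintype V] [Nonempty V] (G : SimpleGraph V)
    [DecidableRel G.Adj] (p r : ℕ) (hrp : r < p)
    (hδ : ∀ w : V, p ≤ G.degree w) (hα : indepNumLE G r) :
    ∃ (k : ℕ) (v : Fin (2 * k + 1) → V), 1 ≤ k ∧ IsSawIn G k v ∧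
      p - r ≤ min (sawVertexDeg G v ((2 * k - 1 : ℕ) : Fin (2 * k + 1)))
                  (sawVertexDeg G v ((2 * k : ℕ) : Fin (2 * k + 1))) := by
  classical
  obtain ⟨k, g, hk1, hg, hcl, hra, hrb⟩ := SawAux.final G p r hrp hδ hα
  refine ⟨k, fun i => g i.val, hk1, ⟨?_, ?_, ?_⟩, ?_⟩
  · intro i j h
    exact Fin.ext (hg.1 i.val (by have := i.isLt; omega) j.val (by have := j.isLt; omega) h)
  · intro i
    have h1 : ((1 : Fin (2*k+1)) : ℕ) = 1 := by
      rw [Fin.val_one']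
      exact Nat.mod_eq_of_lt (by omega)
    have hval : ((i + 1 : Fin (2*k+1)) : ℕ) = (i.val + 1) % (2*k+1) := by
      rw [Fin.val_add, h1]
    by_cases hc : (i : ℕ) = 2*k
    · have hz : ((i + 1 : Fin (2*k+1)) : ℕ) = 0 := by
        rw [hval, hc, Nat.mod_self]
      show G.Adj (g i.val) (g ((i + 1 : Fin (2*k+1)) : ℕ))
      rw [hz, hc]
      exact hcl
    · have hlt : i.val < 2*k := by have := i.isLt; omega
      have hsucc : ((i + 1 : Fin (2*k+1)) : ℕ) = i.val + 1 := by
        rw [hval]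
        exact Nat.mod_eq_of_lt (by omega)
      show G.Adj (g i.val) (g ((i + 1 : Fin (2*k+1)) : ℕ))
      rw [hsucc]
      exact hg.2.1 i.val hlt
  · intro t ht
    have c1 : (((2*t : ℕ) : Fin (2*k+1)) : ℕ) = 2*t := Fin.val_cast_of_lt (by omega)
    have c2 : (((2*t+2 : ℕ) : Fin (2*k+1)) : ℕ) = 2*t+2 := Fin.val_cast_of_lt (by omega)
    show G.Adj (g (((2*t : ℕ) : Fin (2*k+1)) : ℕ)) (g (((2*t+2 : ℕ) : Fin (2*k+1)) : ℕ))
    rw [c1, c2]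
    exact hg.2.2 t ht
  · have key : ∀ (idx : Fin (2*k+1)) (x : V), g idx.val = x → SawAux.Rich G p r g k x →
        p - r ≤ sawVertexDeg G (fun i => g i.val) idx := by
      intro idx x hx hrich
      unfold sawVertexDeg
      rw [Nat.card_eq_fintype_card, Fintype.card_subtype]
      have hchain : SawAux.pathSet g k ∩ G.neighborFinset x ⊆
          (Finset.univ.filter (fun j : Fin (2*k+1) => G.Adj (g idx.val) (g j.val))).image
            (fun j : Fin (2*k+1) => g j.val) := by
        intro u hu
        rcases Finset.mem_inter.mp hu with ⟨hmem, hadj⟩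
        rcases Finset.mem_image.mp hmem with ⟨i, hi, rfl⟩
        rw [Finset.mem_range] at hi
        refine Finset.mem_image.mpr ⟨⟨i, by omega⟩, ?_, rfl⟩
        rw [Finset.mem_filter]
        refine ⟨Finset.mem_univ _, ?_⟩
        rw [hx]
        exact (G.mem_neighborFinset x (g i)).mp hadj
      calc p - r ≤ (SawAux.pathSet g k ∩ G.neighborFinset x).card := hrich
        _ ≤ _ := le_trans (Finset.card_le_card hchain) Finset.card_image_le
    have c1 : (((2*k-1 : ℕ) : Fin (2*k+1)) : ℕ) = 2*k-1 := Fin.val_cast_of_lt (by omega)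
    have c2 : (((2*k : ℕ) : Fin (2*k+1)) : ℕ) = 2*k := Fin.val_cast_of_lt (by omega)
    refine le_min ?_ ?_
    · exact key _ _ (by rw [c1]) hra
    · exact key _ _ (by rw [c2]) hrb
end

section
/- Let G be a Hamiltonian graph of order n ≥ 5 and let (v₁, ..., v_n, v₁) be a Hamiltonian cycle in G. If d(v₁) + d(v_n) ≥ (4n − 1)/3, then [2, ⌈n/2⌉ + 2] ⊆ R_G(v₁, v_n). -/
open SimpleGraph Finset

/-!
Write the cycle as `w 0, …, w (n-1)` and let `A`, `B` be the indices `i ∈ [1, n-2]` of the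
neighbours of `w 0` and of `w (n-1)`. A pair `i ∈ A`, `j = i + m ∈ B` gives the path
`w 0, w i, w (i+1), …, w j, w (n-1)` of order `m + 3` (symmetrically for `i = j + m`), and the edge
`w (n-1) w 0` gives order `2`. The degree condition says `3 (|A| + |B|) > 4 (n - 2)`; if no pair at
distance `m` existed, then `[i ∈ A] + [i ∈ B] + [i+m ∈ A] + [i+m ∈ B] ≤ 2` for every `i`, and
covering `[1, n-2]` by triples `i, i+m, i+2m` and pairs `i, i+m` shows that `|A| + |B|` is at most
`4/3` of `n - 2`.
-/

/-- `pathOrders G u v` is the set `R_G(u, v)` of the orders (numbers of vertices) of all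
`uv`-paths in `G`. -/
def pathOrders {V : Type*} (G : SimpleGraph V) (u v : V) : Set ℕ :=
  {n | ∃ P : G.Walk u v, P.IsPath ∧ P.length + 1 = n}

lemma sum_range_add_shift (f : ℕ → ℕ) (a k l : ℕ) :
    ∑ x ∈ range (k + l), f (a + x) = ∑ x ∈ range k, f (a + x) + ∑ x ∈ range l, f (a + k + x) := by
  simp only [sum_range_add, add_assoc]

section DistanceFree

variable {f : ℕ → ℕ} {m : ℕ}

lemma sum_range_shift_le (hf : ∀ x, f x ≤ 2) (a k : ℕ) : ∑ x ∈ range k, f (a + x) ≤ 2 * k := by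
  simpa [mul_comm] using sum_le_card_nsmul (range k) _ 2 fun x _ => hf (a + x)

lemma sum_range_shift_add_sum_range_shift_le (hpair : ∀ x, f x + f (x + m) ≤ 2) (a k : ℕ) :
    ∑ x ∈ range k, f (a + x) + ∑ x ∈ range k, f (a + m + x) ≤ 2 * k := by
  rw [← sum_add_distrib]
  simpa [mul_comm, add_right_comm] using
    sum_le_card_nsmul (range k) _ 2 fun x _ => hpair (a + x)

/-- For `N = K + 2m`, three decompositions of `[0, N)` into intervals add up to the triples
`x, x + m, x + 2m` (`x < K`) and pairs `y, y + m`; for `N = 2m - 1`, pair `x` with `x + m` and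
leave out `m - 1`. -/
theorem three_mul_sum_range_le (hf : ∀ x, f x ≤ 2) (hpair : ∀ x, f x + f (x + m) ≤ 2) {N : ℕ}
    (hm : 2 * m ≤ N + 1) (hN : 3 ≤ N) : 3 * ∑ x ∈ range N, f x ≤ 4 * N := by
  have split := sum_range_add_shift f
  have pair := sum_range_shift_add_sum_range_shift_le hpair
  have single := sum_range_shift_le hf
  rcases le_or_gt (2 * m) N with h | h
  · obtain ⟨K, rfl⟩ : ∃ K, N = K + m + m := ⟨N - 2 * m, by omega⟩
    have e₁ := split 0 (K + m) m
    have e₂ := split 0 m (K + m)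
    have e₃ := split 0 (m + m) K
    rw [split 0 K m] at e₁
    rw [zero_add, split m K m] at e₂
    rw [split 0 m m] at e₃
    simp only [zero_add, show m + (K + m) = K + m + m by omega,
      show m + m + K = K + m + m by omega, show m + K = K + m by omega] at e₁ e₂ e₃
    have := pair 0 K; have := single (m + m) K; have := pair K m; have := pair 0 m
    have := single 0 m; have := single (K + m) m
    simp only [zero_add] at *
    omega
  · obtain ⟨k, rfl⟩ : ∃ k, m = k + 1 := ⟨m - 1, by omega⟩
    obtain rfl : N = k + 1 + k := by omega
    have e := split 0 (k + 1) k
    rw [split 0 k 1] at e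
    have := pair 0 k; have := single k 1
    simp only [zero_add] at *
    omega

theorem exists_mem_mem_add_eq {A B : Finset ℕ} {N : ℕ} (hA : A ⊆ range N) (hB : B ⊆ range N)
    (hm : 2 * m ≤ N + 1) (hN : 3 ≤ N) (hcard : 4 * N < 3 * (#A + #B)) :
    ∃ i ∈ A, ∃ j ∈ B, j = i + m ∨ i = j + m := by
  by_contra! hfree
  set f : ℕ → ℕ := fun x => (if x ∈ A then 1 else 0) + (if x ∈ B then 1 else 0)
  have hsum : ∑ x ∈ range N, f x = #A + #B := by
    simp only [f, sum_add_distrib, sum_boole, filter_mem_eq_inter, inter_eq_right.mpr hA,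
      inter_eq_right.mpr hB, Nat.cast_id]
  have hf : ∀ x, f x ≤ 2 := fun x => by simp only [f]; split_ifs <;> omega
  have hpair : ∀ x, f x + f (x + m) ≤ 2 := fun x => by
    have h₁ : x ∈ A → x + m ∉ B := fun hx hy => (hfree x hx _ hy).1 rfl
    have h₂ : x + m ∈ A → x ∉ B := fun hy hx => (hfree _ hy x hx).2 rfl
    simp only [f]; split_ifs <;> simp_all
  have := three_mul_sum_range_le hf hpair hm hN
  omega

end DistanceFree

section PathOrders

variable {V : Type*} {G : SimpleGraph V}

lemma pathOrders_comm (u v : V) : pathOrders G u v = pathOrders G v u := by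
  ext k
  exact ⟨fun ⟨P, hP, hk⟩ => ⟨P.reverse, hP.reverse, by simpa⟩,
    fun ⟨P, hP, hk⟩ => ⟨P.reverse, hP.reverse, by simpa⟩⟩

lemma two_mem_pathOrders {u v : V} (h : G.Adj u v) : 2 ∈ pathOrders G u v :=
  ⟨h.toWalk, by simp [h.ne], rfl⟩

def seqWalk (w : ℕ → V) (hw : ∀ i, G.Adj (w i) (w (i + 1))) (a : ℕ) :
    (k : ℕ) → G.Walk (w a) (w (a + k))
  | 0 => .nil
  | k + 1 => (seqWalk w hw a k).concat (hw (a + k))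

@[simp]
lemma seqWalk_length {w : ℕ → V} (hw : ∀ i, G.Adj (w i) (w (i + 1))) (a k : ℕ) :
    (seqWalk w hw a k).length = k := by
  induction k with
  | zero => rfl
  | succ k ih => simp [seqWalk, ih]

@[simp]
lemma seqWalk_support {w : ℕ → V} (hw : ∀ i, G.Adj (w i) (w (i + 1))) (a k : ℕ) :
    (seqWalk w hw a k).support = (List.range' a (k + 1)).map w := by
  induction k with
  | zero => simp [seqWalk]
  | succ k ih => simp [seqWalk, ih, List.range'_concat (n := k + 1)]

lemma add_three_mem_pathOrders {w : ℕ → V} (hw : ∀ i, G.Adj (w i) (w (i + 1))) {n p r s m : ℕ}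
    (hinj : Set.InjOn w (Set.Iio n)) (hp : p < n) (hr : r < n) (hpr : p ≠ r)
    (hps : p < s ∨ s + m < p) (hrs : r < s ∨ s + m < r)
    (hsm : s + m < n) (hx : G.Adj (w p) (w s)) (hy : G.Adj (w (s + m)) (w r)) :
    m + 3 ∈ pathOrders G (w p) (w r) := by
  refine ⟨.cons hx ((seqWalk w hw s m).concat hy), ?_, by simp⟩
  have hsupp : (Walk.cons hx ((seqWalk w hw s m).concat hy)).support =
      (p :: List.range' s (m + 1) ++ [r]).map w := by simp
  rw [Walk.isPath_def, hsupp]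
  have hlt : ∀ x ∈ p :: List.range' s (m + 1) ++ [r], x ∈ Set.Iio n := by
    simp only [List.cons_append, List.mem_cons, List.mem_append, List.mem_range'_1,
      List.not_mem_nil, or_false, Set.mem_Iio]
    intro x hx
    omega
  refine List.Nodup.map_on (fun x hx y hy hxy => hinj (hlt x hx) (hlt y hy) hxy) ?_
  simp only [List.cons_append, List.nodup_cons, List.mem_append, List.mem_range'_1, List.mem_cons,
    List.not_mem_nil, or_false, not_or, not_and, not_lt, List.nodup_append, Order.lt_one_iff,
    List.nodup_range', not_false_eq_true, List.nodup_nil, and_self, ne_eq, forall_eq, and_imp,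
    true_and]
  exact ⟨⟨by omega, hpr⟩, by omega⟩

end PathOrders

section Cycle

variable {V : Type*} {G : SimpleGraph V} {n : ℕ}

def periodicExt (v : Fin n → V) (hn : 0 < n) (i : ℕ) : V := v ⟨i % n, Nat.mod_lt i hn⟩

variable (v : Fin n → V) (hn : 0 < n)

lemma periodicExt_of_lt {i : ℕ} (hi : i < n) : periodicExt v hn i = v ⟨i, hi⟩ := by
  simp [periodicExt, Nat.mod_eq_of_lt hi]

lemma periodicExt_adj_succ
    (hcyc : ∀ i : Fin n, G.Adj (v i) (v ⟨((i : ℕ) + 1) % n, Nat.mod_lt _ hn⟩)) (i : ℕ) :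
    G.Adj (periodicExt v hn i) (periodicExt v hn (i + 1)) := by
  simpa [periodicExt, Nat.add_mod] using hcyc ⟨i % n, Nat.mod_lt i hn⟩

lemma periodicExt_self : periodicExt v hn n = periodicExt v hn 0 := by
  simp [periodicExt]

lemma periodicExt_injOn (hv : Function.Injective v) : Set.InjOn (periodicExt v hn) (Set.Iio n) :=
  fun i hi j hj hij => by
    rw [periodicExt_of_lt v hn hi, periodicExt_of_lt v hn hj] at hij
    exact Fin.mk.inj_iff.mp (hv hij)

lemma exists_lt_periodicExt_eq (hv : Function.Surjective v) (y : V) :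
    ∃ i < n, periodicExt v hn i = y := by
  obtain ⟨i, rfl⟩ := hv y
  exact ⟨i, i.isLt, periodicExt_of_lt v hn i.isLt⟩

end Cycle

lemma degree_le_card_filter_add_one {V ι : Type*} {G : SimpleGraph V} [Fintype V]
    [DecidableRel G.Adj] (w : ι → V) (s : Finset ι) {x z : V}
    (h : ∀ y, G.Adj x y → y = z ∨ ∃ i ∈ s, w i = y) :
    G.degree x ≤ #{i ∈ s | G.Adj x (w i)} + 1 := by
  classical
  calc G.degree x = #(G.neighborFinset x) := (card_neighborFinset_eq_degree G x).symm
    _ ≤ #(insert z ({i ∈ s | G.Adj x (w i)}.image w)) := card_le_card fun y hy => by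
        rw [mem_neighborFinset] at hy
        rcases h y hy with rfl | ⟨i, hi, rfl⟩
        · exact mem_insert_self _ _
        · exact mem_insert_of_mem (mem_image_of_mem w (mem_filter.mpr ⟨hi, hy⟩))
    _ ≤ #{i ∈ s | G.Adj x (w i)} + 1 := (card_insert_le _ _).trans (by gcongr; exact card_image_le)

lemma degree_le_card_filter_adj_succ_add_one {V : Type*} {G : SimpleGraph V} [Fintype V]
    [DecidableRel G.Adj] {w : ℕ → V} {n : ℕ} (hsurj : ∀ y, ∃ k < n, w k = y) {a b : ℕ}
    (hab : a = 0 ∧ b = n - 1 ∨ a = n - 1 ∧ b = 0) :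
    G.degree (w a) ≤ #{i ∈ range (n - 2) | G.Adj (w a) (w (i + 1))} + 1 :=
  degree_le_card_filter_add_one (fun i => w (i + 1)) _ (z := w b) fun y hy => by
    obtain ⟨k, hk, rfl⟩ := hsurj y
    have hka : k ≠ a := by rintro rfl; exact hy.ne rfl
    by_cases hkb : k = b
    · exact .inl (hkb ▸ rfl)
    · exact .inr ⟨k - 1, mem_range.mpr (by omega), by congr 1; omega⟩

/-- Let `G` be a Hamiltonian graph of order `n ≥ 5` and let `(v₁, ..., vₙ, v₁)` be a
Hamiltonian cycle in `G` (given by a bijection `v : Fin n → V` with consecutive vertices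
adjacent, cyclically). If `d(v₁) + d(vₙ) ≥ (4n − 1)/3` (stated multiplied out as
`3(d(v₁) + d(vₙ)) ≥ 4n − 1`), then `[2, ⌈n/2⌉ + 2] ⊆ R_G(v₁, vₙ)`. -/
theorem hamiltonian_path_orders {V : Type*} [Fintype V] (G : SimpleGraph V)
    [DecidableRel G.Adj] (n : ℕ) (hn : 5 ≤ n)
    (v : Fin n → V) (hbij : Function.Bijective v)
    (hcyc : ∀ i : Fin n, G.Adj (v i) (v ⟨((i : ℕ) + 1) % n, Nat.mod_lt _ (by omega)⟩))
    (hdeg : 4 * n - 1 ≤ 3 * (G.degree (v ⟨0, by omega⟩) + G.degree (v ⟨n - 1, by omega⟩))) :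
    ∀ q : ℕ, 2 ≤ q → q ≤ (n + 1) / 2 + 2 →
      q ∈ pathOrders G (v ⟨0, by omega⟩) (v ⟨n - 1, by omega⟩) := by
  intro q hq2 hqu
  have hn0 : 0 < n := by omega
  rw [← periodicExt_of_lt v hn0 (by omega : 0 < n),
    ← periodicExt_of_lt v hn0 (by omega : n - 1 < n)] at hdeg ⊢
  have hw := periodicExt_adj_succ v hn0 hcyc
  have hinj := periodicExt_injOn v hn0 hbij.injective
  have hsurj := exists_lt_periodicExt_eq v hn0 hbij.surjective
  have hlast := hw (n - 1)
  rw [Nat.sub_add_cancel hn0, periodicExt_self] at hlast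
  generalize periodicExt v hn0 = w at hw hinj hsurj hlast hdeg ⊢
  obtain rfl | hq3 := hq2.eq_or_lt
  · exact two_mem_pathOrders hlast.symm
  obtain ⟨m, rfl⟩ : ∃ m, q = m + 3 := ⟨q - 3, by omega⟩
  have hA := degree_le_card_filter_adj_succ_add_one (G := G) hsurj (.inl ⟨rfl, rfl⟩)
  have hB := degree_le_card_filter_adj_succ_add_one (G := G) hsurj (.inr ⟨rfl, rfl⟩)
  obtain ⟨i, hi, j, hj, rfl | rfl⟩ := exists_mem_mem_add_eq (m := m) (N := n - 2)
    (A := {i ∈ range (n - 2) | G.Adj (w 0) (w (i + 1))})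
    (B := {j ∈ range (n - 2) | G.Adj (w (n - 1)) (w (j + 1))})
    (filter_subset _ _) (filter_subset _ _) (by omega) (by omega) (by omega)
  all_goals simp only [mem_filter, mem_range] at hi hj
  · exact add_three_mem_pathOrders hw hinj (s := i + 1) (by omega) (by omega) (by omega) (by omega)
      (by omega) (by omega) hi.2 (by simpa [add_right_comm] using hj.2.symm)
  · rw [pathOrders_comm]
    exact add_three_mem_pathOrders hw hinj (s := j + 1) (by omega) (by omega) (by omega) (by omega)
      (by omega) (by omega) hj.2 (by simpa [add_right_comm] using hi.2.symm)
end

section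
/- Let r ≥ 6 and p ≥ 4r + 5 be integers, and suppose that r(K_{r'+1}, C_{p+1}) ≤ pr' + 1 for all r' < r. If G is a C_{p+1}-free graph of order pr + 1 with independence number α(G) ≤ r, then the minimum degree of G satisfies δ(G) ≥ p. -/
open SimpleGraph

/-- `G` contains a cycle of order (number of vertices) `n`. -/
def hasCycleOfOrder {V : Type*} (G : SimpleGraph V) (n : ℕ) : Prop :=
  ∃ (v : V) (c : G.Walk v v), c.IsCycle ∧ c.length = n

/-- `G` has an independent set of size `r`. -/
def hasIndepSetOfSize {V : Type*} (G : SimpleGraph V) (r : ℕ) : Prop :=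
  ∃ s : Finset V, s.card = r ∧ ∀ x ∈ s, ∀ y ∈ s, x ≠ y → ¬ G.Adj x y

/-- Let `r ≥ 6` and `p ≥ 4r + 5` be integers, and suppose that
`r(K_{r'+1}, C_{p+1}) ≤ pr' + 1` for all `r' < r`, i.e. every `C_{p+1}`-free graph of
order `pr' + 1` has an independent set of size `r' + 1`. If `G` is a `C_{p+1}`-free graph
of order `pr + 1` with independence number `α(G) ≤ r`, then `δ(G) ≥ p`. -/
theorem min_degree_of_cycle_free (r p : ℕ) (hr : 6 ≤ r) (hp : 4 * r + 5 ≤ p)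
    (hRam : ∀ r' : ℕ, r' < r → ∀ G' : SimpleGraph (Fin (p * r' + 1)),
      ¬ hasCycleOfOrder G' (p + 1) → hasIndepSetOfSize G' (r' + 1))
    {V : Type*} [Fintype V] (G : SimpleGraph V) [DecidableRel G.Adj]
    (hcard : Fintype.card V = p * r + 1)
    (hfree : ¬ hasCycleOfOrder G (p + 1))
    (hα : indepNumLE G r) :
    ∀ w : V, p ≤ G.degree w := by
  classical
  intro w
  by_contra hdeg
  push_neg at hdeg
  -- the closed neighborhood of w
  set S : Finset V := insert w (G.neighborFinset w) with hS
  have hScard : S.card ≤ p := by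
    calc S.card ≤ (G.neighborFinset w).card + 1 := Finset.card_insert_le _ _
    _ = G.degree w + 1 := by rw [G.card_neighborFinset_eq_degree]
    _ ≤ p := hdeg
  -- complement has enough vertices
  have hTcard : p * (r - 1) + 1 ≤ Sᶜ.card := by
    have : Sᶜ.card = Fintype.card V - S.card := Finset.card_compl S
    rw [this, hcard]
    have hr1 : 1 ≤ r := by omega
    have h1 : r - 1 + 1 = r := by omega
    have : p * r = p * (r - 1) + p := by
      calc p * r = p * (r - 1 + 1) := by rw [h1]
      _ = p * (r - 1) + p := by ring
    omega
  obtain ⟨T, hTsub, hTc⟩ := Finset.exists_subset_card_eq hTcard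
  -- embedding from Fin n into V
  set n := p * (r - 1) + 1 with hn
  let e : ↥T ≃ Fin n := T.equivFinOfCardEq hTc
  let f : Fin n ↪ V := ⟨fun i => ((e.symm i : ↥T) : V), by
    intro a b hab
    apply e.symm.injective
    exact Subtype.ext hab⟩
  have hfmem : ∀ i : Fin n, f i ∈ T := fun i => (e.symm i).2
  let G' : SimpleGraph (Fin n) := G.comap f
  have hr' : r - 1 < r := by omega
  have hfree' : ¬ hasCycleOfOrder G' (p + 1) := by
    rintro ⟨v, c, hc, hl⟩
    exact hfree ⟨f v, c.map (SimpleGraph.Embedding.comap f G).toHom,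
      hc.map f.injective, by exact (Walk.length_map _ c).trans hl⟩
  obtain ⟨s, hsc, hsind⟩ := hRam (r - 1) hr' G' hfree'
  -- map back
  have hrw : r - 1 + 1 = r := by omega
  let s' : Finset V := s.image f
  have hs'c : s'.card = r := by
    rw [Finset.card_image_of_injective _ f.injective, hsc, hrw]
  have hws' : w ∉ s' := by
    intro hw
    obtain ⟨i, _, hi⟩ := Finset.mem_image.mp hw
    have := hTsub (hi ▸ hfmem i)
    simp [hS] at this
  have hs'ind : ∀ x ∈ insert w s', ∀ y ∈ insert w s', x ≠ y → ¬ G.Adj x y := by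
    intro x hx y hy hxy hadj
    have key : ∀ z ∈ s', ¬ G.Adj w z := by
      intro z hz hadjz
      obtain ⟨i, _, hi⟩ := Finset.mem_image.mp hz
      have hzT := hTsub (hi ▸ hfmem i)
      have : z ∈ S := by
        simp [hS, SimpleGraph.mem_neighborFinset]
        right; exact hadjz
      exact (Finset.mem_compl.mp hzT) this
    rcases Finset.mem_insert.mp hx with rfl | hxs
    · rcases Finset.mem_insert.mp hy with rfl | hys
      · exact hxy rfl
      · exact key y hys hadj
    · rcases Finset.mem_insert.mp hy with rfl | hys
      · exact key x hxs hadj.symm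
      · obtain ⟨i, hi, rfl⟩ := Finset.mem_image.mp hxs
        obtain ⟨j, hj, rfl⟩ := Finset.mem_image.mp hys
        have hij : i ≠ j := fun h => hxy (by rw [h])
        exact hsind i hi j hj hij hadj
  have := hα (insert w s') hs'ind
  rw [Finset.card_insert_of_notMem hws', hs'c] at this
  omega
end
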